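/- Let X be a completely regular Hausdorff (T3.5) space. If player II has a winning strategy in the ω-Rothberger game G1(Ω_X,Ω_X), then player I has a winning strategy in the game ΩFO(X). -/

import Mathlib

open Set Filter Topology

/-- The list `[a 0, …, a (n-1)]` of the first `n` moves of a play `a`. -/
def hist {α : Type*} (a : ℕ → α) (n : ℕ) : List α :=
  List.ofFn fun i : Fin n => a i

section SelectionGames

variable {M : Type*}

/-- The selection principle `S1(A,B)`. -/
def S1 (A B : Set (Set M)) : Prop :=
  ∀ a : ℕ → Set M, (∀ n, a n ∈ A) →
    ∃ b : ℕ → M, (∀ n, b n ∈ a n) ∧ Set.range b ∈ B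

/-- The selection principle `Sfin(A,B)`. -/
def Sfin (A B : Set (Set M)) : Prop :=
  ∀ a : ℕ → Set M, (∀ n, a n ∈ A) →
    ∃ b : ℕ → Set M, (∀ n, b n ⊆ a n ∧ (b n).Finite) ∧ (⋃ n, b n) ∈ B

/-- Player I has a winning predetermined strategy in the selection game `G1(A,B)`:
a sequence of moves `σ n ∈ A`, depending only on the round number, such that
no legal sequence of responses by II produces a member of `B`. -/
def IPredetWinsG1 (A B : Set (Set M)) : Prop :=
  ∃ σ : ℕ → Set M, (∀ n, σ n ∈ A) ∧
    ∀ b : ℕ → M, (∀ n, b n ∈ σ n) → Set.range b ∉ B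

/-- Player I has a winning predetermined strategy in the selection game `Gfin(A,B)`. -/
def IPredetWinsGfin (A B : Set (Set M)) : Prop :=
  ∃ σ : ℕ → Set M, (∀ n, σ n ∈ A) ∧
    ∀ b : ℕ → Set M, (∀ n, b n ⊆ σ n ∧ (b n).Finite) → (⋃ n, b n) ∉ B

/-- Player I has a winning (perfect-information) strategy in `G1(A,B)`:
I's move in round `n` depends on II's previous moves `b 0, …, b (n-1)`. -/
def IWinsG1 (A B : Set (Set M)) : Prop :=
  ∃ σ : List M → Set M, (∀ h, σ h ∈ A) ∧
    ∀ b : ℕ → M, (∀ n, b n ∈ σ (hist b n)) → Set.range b ∉ B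

/-- Player II has a winning (perfect-information) strategy in `G1(A,B)`:
II's move in round `n` depends on I's previous moves `a 0, …, a (n-1)`
together with I's current move `a n`; it is legal and always produces a member of `B`. -/
def IIWinsG1 (A B : Set (Set M)) : Prop :=
  ∃ σ : List (Set M) → Set M → M,
    ∀ a : ℕ → Set M, (∀ n, a n ∈ A) →
      (∀ n, σ (hist a n) (a n) ∈ a n) ∧
      Set.range (fun n => σ (hist a n) (a n)) ∈ B

/-- Player II has a winning Markov strategy in `G1(A,B)`: II's move depends only on
I's current move and the round number. -/
def IIMarkovWinsG1 (A B : Set (Set M)) : Prop :=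
  ∃ σ : Set M → ℕ → M,
    ∀ a : ℕ → Set M, (∀ n, a n ∈ A) →
      (∀ n, σ (a n) n ∈ a n) ∧
      Set.range (fun n => σ (a n) n) ∈ B

end SelectionGames

section TopologicalGames

variable {X : Type*}

/-- `𝒰` is an open cover of the space `X`. -/
def IsOpenCover [TopologicalSpace X] (𝒰 : Set (Set X)) : Prop :=
  (∀ U ∈ 𝒰, IsOpen U) ∧ ⋃₀ 𝒰 = Set.univ

/-- `𝒰` is an ω-cover of `X`: an open cover such that every finite subset of `X`
is contained in a single member of `𝒰`. -/
def IsOmegaCover [TopologicalSpace X] (𝒰 : Set (Set X)) : Prop :=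
  IsOpenCover 𝒰 ∧ ∀ F : Finset X, ∃ U ∈ 𝒰, ↑F ⊆ U

/-- `D` is a closed discrete subset of the space. -/
def IsClosedDiscrete [TopologicalSpace X] (D : Set X) : Prop :=
  IsClosed D ∧ ∀ x ∈ D, ∃ U : Set X, IsOpen U ∧ U ∩ D = {x}

/-- Player I has a winning predetermined strategy in the point-open game `PO(X)`. -/
def IPredetWinsPO (X : Type*) [TopologicalSpace X] : Prop :=
  ∃ p : ℕ → X, ∀ U : ℕ → Set X,
    (∀ n, IsOpen (U n) ∧ p n ∈ U n) → (⋃ n, U n) = Set.univ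

/-- Player II has a winning Markov strategy in the point-open game `PO(X)`. -/
def IIMarkovWinsPO (X : Type*) [TopologicalSpace X] : Prop :=
  ∃ σ : X → ℕ → Set X,
    (∀ x n, IsOpen (σ x n) ∧ x ∈ σ x n) ∧
    ∀ p : ℕ → X, (⋃ n, σ (p n) n) ≠ Set.univ

/-- Player I has a winning predetermined strategy in the finite-open game `FO(X)`. -/
def IPredetWinsFO (X : Type*) [TopologicalSpace X] : Prop :=
  ∃ p : ℕ → Finset X, ∀ U : ℕ → Set X,
    (∀ n, IsOpen (U n) ∧ ↑(p n) ⊆ U n) → (⋃ n, U n) = Set.univ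

/-- Player II has a winning Markov strategy in the finite-open game `FO(X)`. -/
def IIMarkovWinsFO (X : Type*) [TopologicalSpace X] : Prop :=
  ∃ σ : Finset X → ℕ → Set X,
    (∀ F n, IsOpen (σ F n) ∧ ↑F ⊆ σ F n) ∧
    ∀ F : ℕ → Finset X, (⋃ n, σ (F n) n) ≠ Set.univ

/-- Player I has a winning predetermined strategy in the game `ΩFO(X)`. -/
def IPredetWinsOmegaFO (X : Type*) [TopologicalSpace X] : Prop :=
  ∃ p : ℕ → Finset X, ∀ U : ℕ → Set X,
    (∀ n, IsOpen (U n) ∧ ↑(p n) ⊆ U n) → IsOmegaCover (Set.range U)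

/-- Player I has a winning (perfect-information) strategy in the game `ΩFO(X)`:
I's move in round `n` depends on II's previous moves `U 0, …, U (n-1)`. -/
def IWinsOmegaFO (X : Type*) [TopologicalSpace X] : Prop :=
  ∃ σ : List (Set X) → Finset X, ∀ U : ℕ → Set X,
    (∀ n, IsOpen (U n) ∧ ↑(σ (hist U n)) ⊆ U n) → IsOmegaCover (Set.range U)

/-- Player II has a winning (perfect-information) strategy in the game `ΩFO(X)`:
II's move in round `n` depends on I's previous moves together with I's current move. -/
def IIWinsOmegaFO (X : Type*) [TopologicalSpace X] : Prop :=
  ∃ σ : List (Finset X) → Finset X → Set X,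
    (∀ h F, IsOpen (σ h F) ∧ ↑F ⊆ σ h F) ∧
    ∀ F : ℕ → Finset X, ¬ IsOmegaCover (Set.range fun n => σ (hist F n) (F n))

/-- Player II has a winning Markov strategy in the game `ΩFO(X)`. -/
def IIMarkovWinsOmegaFO (X : Type*) [TopologicalSpace X] : Prop :=
  ∃ σ : Finset X → ℕ → Set X,
    (∀ F n, IsOpen (σ F n) ∧ ↑F ⊆ σ F n) ∧
    ∀ F : ℕ → Finset X, ¬ IsOmegaCover (Set.range fun n => σ (F n) n)

/-- Player II has a winning tactic in the game `ΩPO(X)`: II's move depends only on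
I's current move. -/
def IITacticWinsOmegaPO (X : Type*) [TopologicalSpace X] : Prop :=
  ∃ σ : X → Set X,
    (∀ x, IsOpen (σ x) ∧ x ∈ σ x) ∧
    ∀ p : ℕ → X, ¬ IsOmegaCover (Set.range fun n => σ (p n))

/-- Player I has a winning (perfect-information) strategy in the discrete
selection game `CD(Y)`. -/
def IWinsCD (Y : Type*) [TopologicalSpace Y] : Prop :=
  ∃ σ : List Y → Set Y,
    (∀ h, IsOpen (σ h) ∧ (σ h).Nonempty) ∧
    ∀ y : ℕ → Y, (∀ n, y n ∈ σ (hist y n)) → ¬ IsClosedDiscrete (Set.range y)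

/-- Player I has a winning predetermined strategy in the discrete selection game `CD(Y)`. -/
def IPredetWinsCD (Y : Type*) [TopologicalSpace Y] : Prop :=
  ∃ U : ℕ → Set Y, (∀ n, IsOpen (U n) ∧ (U n).Nonempty) ∧
    ∀ y : ℕ → Y, (∀ n, y n ∈ U n) → ¬ IsClosedDiscrete (Set.range y)

/-- Player II has a winning (perfect-information) strategy in the discrete
selection game `CD(Y)`. -/
def IIWinsCD (Y : Type*) [TopologicalSpace Y] : Prop :=
  ∃ σ : List (Set Y) → Set Y → Y,
    ∀ U : ℕ → Set Y, (∀ n, IsOpen (U n) ∧ (U n).Nonempty) →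
      (∀ n, σ (hist U n) (U n) ∈ U n) ∧
      IsClosedDiscrete (Set.range fun n => σ (hist U n) (U n))

/-- Player II has a winning Markov strategy in the discrete selection game `CD(Y)`. -/
def IIMarkovWinsCD (Y : Type*) [TopologicalSpace Y] : Prop :=
  ∃ σ : Set Y → ℕ → Y,
    ∀ U : ℕ → Set Y, (∀ n, IsOpen (U n) ∧ (U n).Nonempty) →
      (∀ n, σ (U n) n ∈ U n) ∧
      IsClosedDiscrete (Set.range fun n => σ (U n) n)

/-- Player II has a winning (perfect-information) strategy in the closure game `CL(Y,x)`. -/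
def IIWinsCL (Y : Type*) [TopologicalSpace Y] (x : Y) : Prop :=
  ∃ σ : List (Set Y) → Set Y → Y,
    ∀ U : ℕ → Set Y, (∀ n, IsOpen (U n) ∧ (U n).Nonempty) →
      (∀ n, σ (hist U n) (U n) ∈ U n) ∧
      x ∉ closure (Set.range fun n => σ (hist U n) (U n))

/-- Player II has a winning Markov strategy in the closure game `CL(Y,x)`. -/
def IIMarkovWinsCL (Y : Type*) [TopologicalSpace Y] (x : Y) : Prop :=
  ∃ σ : Set Y → ℕ → Y,
    ∀ U : ℕ → Set Y, (∀ n, IsOpen (U n) ∧ (U n).Nonempty) →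
      (∀ n, σ (U n) n ∈ U n) ∧
      x ∉ closure (Set.range fun n => σ (U n) n)

/-- Player II has a winning (perfect-information) strategy in Gruenhage's
clustering game at `x`. -/
def IIWinsGruCluster (Y : Type*) [TopologicalSpace Y] (x : Y) : Prop :=
  ∃ σ : List (Set Y) → Set Y → Y,
    ∀ U : ℕ → Set Y, (∀ n, IsOpen (U n) ∧ x ∈ U n) →
      (∀ n, σ (hist U n) (U n) ∈ U n) ∧
      ¬ MapClusterPt x atTop (fun n => σ (hist U n) (U n))

/-- Player II has a winning Markov strategy in Gruenhage's clustering game at `x`. -/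
def IIMarkovWinsGruCluster (Y : Type*) [TopologicalSpace Y] (x : Y) : Prop :=
  ∃ σ : Set Y → ℕ → Y,
    ∀ U : ℕ → Set Y, (∀ n, IsOpen (U n) ∧ x ∈ U n) →
      (∀ n, σ (U n) n ∈ U n) ∧
      ¬ MapClusterPt x atTop (fun n => σ (U n) n)

/-- Player I has a winning predetermined strategy in Gruenhage's clustering game at `x`. -/
def IPredetWinsGruCluster (Y : Type*) [TopologicalSpace Y] (x : Y) : Prop :=
  ∃ U : ℕ → Set Y, (∀ n, IsOpen (U n) ∧ x ∈ U n) ∧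
    ∀ y : ℕ → Y, (∀ n, y n ∈ U n) → MapClusterPt x atTop y

/-- Player I has a winning predetermined strategy in Gruenhage's W-game at `x`
(I wins when II's points converge to `x`). -/
def IPredetWinsGruW (Y : Type*) [TopologicalSpace Y] (x : Y) : Prop :=
  ∃ U : ℕ → Set Y, (∀ n, IsOpen (U n) ∧ x ∈ U n) ∧
    ∀ y : ℕ → Y, (∀ n, y n ∈ U n) → Filter.Tendsto y atTop (𝓝 x)

end TopologicalGames

/-- `Cp X`: the continuous real-valued functions on `X` with the topology of
pointwise convergence (inherited from the product topology on `X → ℝ`). -/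
def Cp (X : Type*) [TopologicalSpace X] : Type _ := {f : X → ℝ // Continuous f}

instance (X : Type*) [TopologicalSpace X] : TopologicalSpace (Cp X) :=
  inferInstanceAs (TopologicalSpace {f : X → ℝ // Continuous f})

/-- The constant zero function, as an element of `Cp X`. -/
def Cp.zero (X : Type*) [TopologicalSpace X] : Cp X := ⟨fun _ => 0, continuous_const⟩

/-!
Galvin's argument. Fix a winning strategy `σ` of II in `G1(Ω_X, Ω_X)`. At a position `l` of
ω-covers, `σ l` selects from every ω-cover, so there is a finite set `F l` every open superset
of which is `σ l 𝒰` for some ω-cover `𝒰`. Player I plays `F l`, where `l` is a simulated play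
against `σ`: each answer `U` of II is `σ l 𝒰` for some ω-cover `𝒰`, which becomes the next move
of the simulated play. II's answers are then exactly `σ`'s moves in a play it wins, so they
form an ω-cover.
-/

theorem hist_succ {α : Type*} (a : ℕ → α) (n : ℕ) : hist a (n + 1) = hist a n ++ [a n] := by
  rw [hist, hist, List.ofFn_succ']
  simp [List.concat_eq_append]

theorem mem_hist {α : Type*} {a : ℕ → α} {n : ℕ} {x : α} : x ∈ hist a n ↔ ∃ k < n, a k = x := by
  simp [hist, List.mem_ofFn, Fin.exists_iff]

theorem hist_getD {α : Type*} (l : List α) (d : α) : hist (fun n => l.getD n d) l.length = l := by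
  apply List.ext_getElem <;> simp [hist]

def replayHist {α β : Type*} (f : List β → α → β) (l : List α) : List β :=
  l.foldl (fun acc x => acc ++ [f acc x]) []

theorem replayHist_hist {α β : Type*} (f : List β → α → β) (u : ℕ → α) (n : ℕ) :
    replayHist f (hist u n) = hist (fun k => f (replayHist f (hist u k)) (u k)) n := by
  induction n with
  | zero => rfl
  | succ n ih => rw [hist_succ, hist_succ, ← ih, replayHist, List.foldl_append]; rfl

theorem mem_of_forall_play_mem {M : Type*} {A B : Set (Set M)} {σ : List (Set M) → Set M → M}
    (hσ : ∀ a : ℕ → Set M, (∀ n, a n ∈ A) →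
      (∀ n, σ (hist a n) (a n) ∈ a n) ∧ Set.range (fun n => σ (hist a n) (a n)) ∈ B)
    {l : List (Set M)} (hl : ∀ V ∈ l, V ∈ A) {S : Set M} (hS : S ∈ A) : σ l S ∈ S := by
  set a : ℕ → Set M := fun n => l.getD n S
  have ha : ∀ n, a n ∈ A := fun n => by
    rcases lt_or_ge n l.length with hn | hn
    · simp only [a, List.getD_eq_getElem _ _ hn]
      exact hl _ (List.getElem_mem hn)
    · simpa only [a, List.getD_eq_default _ _ hn] using hS
  have := (hσ a ha).1 l.length
  rwa [hist_getD, show a l.length = S by simp [a]] at this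

section OmegaCover

variable {X : Type*} [TopologicalSpace X]

theorem isOmegaCover_range {g : Finset X → Set X} (hg : ∀ F, IsOpen (g F) ∧ ↑F ⊆ g F) :
    IsOmegaCover (Set.range g) := by
  refine ⟨⟨?_, ?_⟩, fun F => ⟨g F, ⟨F, rfl⟩, (hg F).2⟩⟩
  · rintro _ ⟨F, rfl⟩
    exact (hg F).1
  · exact Set.eq_univ_of_forall fun x => ⟨g {x}, ⟨{x}, rfl⟩, (hg {x}).2 (by simp)⟩

theorem exists_finset_forall_isOpen_superset_eq_select {τ : Set (Set X) → Set X}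
    (hτ : ∀ 𝒰, IsOmegaCover 𝒰 → τ 𝒰 ∈ 𝒰) :
    ∃ F : Finset X, ∀ U, IsOpen U → ↑F ⊆ U → ∃ 𝒰, IsOmegaCover 𝒰 ∧ τ 𝒰 = U := by
  -- Otherwise picking, for each finite `F`, an open superset of `F` that is never selected
  -- gives an ω-cover none of whose members can be selected from it.
  by_contra! hbad
  choose g hg using hbad
  have hcover := isOmegaCover_range fun F => ⟨(hg F).1, (hg F).2.1⟩
  obtain ⟨F, hF⟩ := hτ _ hcover
  exact (hg F).2.2 _ hcover hF.symm

theorem iWinsOmegaFO_of_forall_isOpen_superset_eq {σ : List (Set (Set X)) → Set (Set X) → Set X}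
    (hσ : ∀ a : ℕ → Set (Set X), (∀ n, IsOmegaCover (a n)) →
      IsOmegaCover (Set.range fun n => σ (hist a n) (a n)))
    (hsel : ∀ l : List (Set (Set X)), (∀ V ∈ l, IsOmegaCover V) → ∃ F : Finset X,
      ∀ U, IsOpen U → ↑F ⊆ U → ∃ 𝒰, IsOmegaCover 𝒰 ∧ σ l 𝒰 = U) :
    IWinsOmegaFO X := by
  choose! F hF using hsel
  choose! nxt hnxt using hF
  refine ⟨fun h => F (replayHist nxt h), fun U hU => ?_⟩
  set a : ℕ → Set (Set X) := fun n => nxt (replayHist nxt (hist U n)) (U n)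
  have hreplay : ∀ n, replayHist nxt (hist U n) = hist a n := replayHist_hist nxt U
  have hplay : ∀ n, IsOmegaCover (a n) ∧ σ (hist a n) (a n) = U n := by
    intro n
    induction n using Nat.strong_induction_on with
    | _ n ih =>
      have hlegal : ∀ V ∈ hist a n, IsOmegaCover V := by
        intro V hV
        obtain ⟨k, hk, rfl⟩ := mem_hist.1 hV
        exact (ih k hk).1
      rw [← hreplay] at hlegal ⊢
      exact hnxt _ hlegal _ (hU n).1 (hU n).2
  have hU_eq : (fun n => σ (hist a n) (a n)) = U := funext fun n => (hplay n).2
  simpa [hU_eq] using hσ a fun n => (hplay n).1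

end OmegaCover

theorem II_wins_omega_rothberger_implies_I_wins_omegaFO_general
    (X : Type*) [TopologicalSpace X]
    (h : IIWinsG1 {𝒰 : Set (Set X) | IsOmegaCover 𝒰} {𝒰 : Set (Set X) | IsOmegaCover 𝒰}) :
    IWinsOmegaFO X := by
  obtain ⟨σ, hσ⟩ := h
  exact iWinsOmegaFO_of_forall_isOpen_superset_eq (fun a ha => (hσ a ha).2) fun l hl =>
    exists_finset_forall_isOpen_superset_eq_select fun _ h𝒰 => mem_of_forall_play_mem hσ hl h𝒰

/-- For a T3.5 space `X`, if II has a winning strategy in the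
ω-Rothberger game `G1(Ω_X, Ω_X)`, then I has a winning strategy in `ΩFO(X)`. -/
theorem II_wins_omega_rothberger_implies_I_wins_omegaFO
    (X : Type*) [TopologicalSpace X] [T35Space X]
    (h : IIWinsG1 {𝒰 : Set (Set X) | IsOmegaCover 𝒰} {𝒰 : Set (Set X) | IsOmegaCover 𝒰}) :
    IWinsOmegaFO X :=
  II_wins_omega_rothberger_implies_I_wins_omegaFO_general X h
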